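/- Let z ∈ ℝⁿ with mean z̄ = (1/n)∑zᵢ and empirical variance s² = (1/n)∑(zᵢ - z̄)². Then for any ρ ≥ 0, the supremum of ⟨p, z⟩ over probability vectors p ∈ ℝⁿ₊ with ∑pᵢ = 1 and (1/2)‖np - 1‖₂² ≤ ρ is at most z̄ + √(2ρ s²/n). -/

import Mathlib

open Finset Real

/-- The robust supremum `sup {⟨p, z⟩ : p a probability vector, (1/2)‖np - 1‖₂² ≤ ρ}`. -/
noncomputable def robustSup (n : ℕ) (ρ : ℝ) (z : Fin n → ℝ) : ℝ :=
  sSup {r : ℝ | ∃ p : Fin n → ℝ, (∀ i, 0 ≤ p i) ∧ (∑ i, p i) = 1 ∧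
    (1 / 2) * (∑ i, ((n : ℝ) * p i - 1) ^ 2) ≤ ρ ∧ r = ∑ i, p i * z i}

/-- The empirical mean of `z`. -/
noncomputable def empMean (n : ℕ) (z : Fin n → ℝ) : ℝ := (1 / n) * ∑ i, z i

/-- The empirical variance of `z`. -/
noncomputable def empVar (n : ℕ) (z : Fin n → ℝ) : ℝ :=
  (1 / n) * ∑ i, (z i - empMean n z) ^ 2

/-! Since `∑ pᵢ = 1`, the deviation `n (⟨p, z⟩ - z̄)` equals the covariance-like sum
`∑ (n pᵢ - 1)(zᵢ - z̄)`. Cauchy–Schwarz bounds it by `√(∑ (n pᵢ - 1)²) · √(∑ (zᵢ - z̄)²)`,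
which the χ² constraint and `∑ (zᵢ - z̄)² = n s²` turn into `√(2ρ) · √(n s²) = n √(2ρ s² / n)`. -/

theorem Finset.sum_sub_mul_sub_eq {ι R : Type*} [CommRing R] (s : Finset ι) (p q z : ι → R)
    (c : R) (h : ∑ i ∈ s, p i = ∑ i ∈ s, q i) :
    ∑ i ∈ s, (p i - q i) * (z i - c) = ∑ i ∈ s, p i * z i - ∑ i ∈ s, q i * z i := by
  simp only [sub_mul, mul_sub, sum_sub_distrib, ← sum_mul, h]
  ring

theorem sum_eq_mul_empMean {n : ℕ} (hn : (n : ℝ) ≠ 0) (z : Fin n → ℝ) :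
    ∑ i, z i = n * empMean n z := by
  rw [empMean, ← mul_assoc, mul_one_div_cancel hn, one_mul]

theorem sum_sq_sub_empMean {n : ℕ} (hn : (n : ℝ) ≠ 0) (z : Fin n → ℝ) :
    ∑ i, (z i - empMean n z) ^ 2 = n * empVar n z := by
  rw [empVar, ← mul_assoc, mul_one_div_cancel hn, one_mul]

theorem empVar_nonneg (n : ℕ) (z : Fin n → ℝ) : 0 ≤ empVar n z := by
  unfold empVar
  positivity

theorem sum_mul_le_empMean_add_sqrt {n : ℕ} {ρ : ℝ} {p : Fin n → ℝ} (z : Fin n → ℝ)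
    (hp : ∑ i, p i = 1) (hpρ : (1 / 2) * ∑ i, ((n : ℝ) * p i - 1) ^ 2 ≤ ρ) :
    ∑ i, p i * z i ≤ empMean n z + √(2 * ρ * empVar n z / n) := by
  set m := empMean n z
  have hn : (0 : ℝ) < n := by
    rcases Nat.eq_zero_or_pos n with rfl | hn
    · simp at hp
    · exact_mod_cast hn
  have hcov : n * (∑ i, p i * z i - m) = ∑ i, ((n : ℝ) * p i - 1) * (z i - m) := by
    rw [sum_sub_mul_sub_eq _ _ _ _ _ (by simp [← mul_sum, hp])]
    simp only [mul_assoc, ← mul_sum, one_mul, sum_eq_mul_empMean hn.ne' z, m]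
    ring
  suffices n * (∑ i, p i * z i - m) ≤ n * √(2 * ρ * empVar n z / n) by
    linarith [le_of_mul_le_mul_left this hn]
  calc (n : ℝ) * (∑ i, p i * z i - m)
      ≤ √(∑ i, ((n : ℝ) * p i - 1) ^ 2) * √(∑ i, (z i - m) ^ 2) :=
        hcov ▸ sum_mul_le_sqrt_mul_sqrt _ _ _
    _ ≤ √(2 * ρ) * √(n * empVar n z) := by
        rw [sum_sq_sub_empMean hn.ne' z]
        gcongr
        linarith
    _ = n * √(2 * ρ * empVar n z / n) := by
        have hscale : 2 * ρ * (n * empVar n z) = n ^ 2 * (2 * ρ * empVar n z / n) := by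
          field_simp
        rw [← sqrt_mul' _ (mul_nonneg hn.le (empVar_nonneg n z)), hscale,
          sqrt_mul (sq_nonneg _), sqrt_sq hn.le]

theorem robustSup_le_mean_add_sqrt_var (n : ℕ) (hn : 0 < n) (ρ : ℝ) (hρ : 0 ≤ ρ)
    (z : Fin n → ℝ) :
    robustSup n ρ z ≤ empMean n z + Real.sqrt (2 * ρ * empVar n z / n) := by
  have hN : (n : ℝ) ≠ 0 := by positivity
  refine csSup_le ⟨_, fun _ => 1 / n, fun _ => by positivity, ?_, ?_, rfl⟩ ?_
  · simp [hN]
  · simpa [hN] using hρ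
  · rintro r ⟨p, -, hp, hpρ, rfl⟩
    exact sum_mul_le_empMean_add_sqrt z hp hpρ
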